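/- arXiv:math/0608289 — 2 statements merged into one kernel-verified Lean document; each statement's English description precedes it below -/
import Mathlib

section
/- If X is a compact metric space and f : X → X is a positively expansive homeomorphism (i.e., there exists c > 0 such that for all distinct x, y in X there is some n ≥ 0 with dist(f^n x, f^n y) > c), then X is finite. -/
/-!
Expansivity is uniform on a compact space: there is `N` such that points whose orbits stay
`c`-close up to time `N` are `ε`-close, with `ε` a modulus of uniform continuity of `f⁻¹` at
scale `c`. Hence `f⁻¹` preserves `N`-step `c`-closeness, and then long backward iterates shrink
every `N`-step `c`-close pair to arbitrarily small distance. Since pairs at distance `< ρ` are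
`N`-step `c`-close, for every `δ > 0` the space is covered by the `f^K`-preimages of finitely
many `ρ/2`-balls, each of diameter `< δ`; the number of balls does not depend on `δ`, so `X`
is finite.
-/

open Filter Topology Uniformity

section

variable {X : Type*} [MetricSpace X]

def OrbitClose (f : X → X) (c : ℝ) (N : ℕ) (x y : X) : Prop :=
  ∀ n ≤ N, dist (f^[n] x) (f^[n] y) ≤ c

namespace OrbitClose

variable {f : X → X} {c : ℝ} {N : ℕ} {x y : X}

theorem mono {M : ℕ} (h : OrbitClose f c N x y) (hMN : M ≤ N) : OrbitClose f c M x y :=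
  fun n hn => h n (hn.trans hMN)

theorem dist_le (h : OrbitClose f c N x y) : dist x y ≤ c :=
  h 0 N.zero_le

end OrbitClose

theorem isClosed_setOf_orbitClose {f : X → X} (hf : Continuous f) (c : ℝ) (N : ℕ) :
    IsClosed {p : X × X | OrbitClose f c N p.1 p.2} := by
  simp only [OrbitClose, Set.ofPred_forall]
  exact isClosed_iInter fun n => isClosed_iInter fun _ =>
    isClosed_le (((hf.iterate n).comp continuous_fst).dist ((hf.iterate n).comp continuous_snd))
      continuous_const

theorem exists_orbitClose_of_dist_lt [CompactSpace X] {f : X → X} (hf : Continuous f) {c : ℝ}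
    (hc : 0 < c) (N : ℕ) : ∃ ρ > 0, ∀ x y, dist x y < ρ → OrbitClose f c N x y := by
  have hclose : ∀ᶠ p in 𝓤 X, OrbitClose f c N p.1 p.2 := by
    refine (eventually_all_finite (Set.finite_Iic N)).2 fun n _ => ?_
    filter_upwards [CompactSpace.uniformContinuous_of_continuous (hf.iterate n)
      (Metric.dist_mem_uniformity hc)] with p hp
    exact hp.out.le
  obtain ⟨ρ, hρ, hρclose⟩ := Metric.mem_uniformity_dist.1 hclose
  exact ⟨ρ, hρ, fun x y hxy => hρclose hxy⟩

theorem exists_dist_lt_of_orbitClose [CompactSpace X] {f : X → X} (hf : Continuous f) {c : ℝ}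
    (hexp : ∀ x y : X, x ≠ y → ∃ n : ℕ, c < dist (f^[n] x) (f^[n] y)) {δ : ℝ} (hδ : 0 < δ) :
    ∃ N, ∀ x y, OrbitClose f c N x y → dist x y < δ := by
  have hcover : {p : X × X | δ ≤ dist p.1 p.2} ⊆ ⋃ N, {p | OrbitClose f c N p.1 p.2}ᶜ := by
    rintro ⟨x, y⟩ hxy
    obtain ⟨n, hn⟩ := hexp x y (dist_pos.1 (hδ.trans_le hxy))
    exact Set.mem_iUnion.2 ⟨n, fun hclose => (hclose n le_rfl).not_gt hn⟩
  obtain ⟨N, hN⟩ := (isClosed_le continuous_const continuous_dist).isCompact.elim_directed_cover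
    _ (fun N => (isClosed_setOf_orbitClose hf c N).isOpen_compl) hcover
    (Monotone.directed_le fun _ _ hMN _ hp hclose => hp (hclose.mono hMN))
  exact ⟨N, fun x y hclose => not_le.1 fun hxy => @hN (x, y) hxy hclose⟩

section Homeomorph

variable (f : X ≃ₜ X)

theorem Homeomorph.iterate_symm_iterate_of_le {n k : ℕ} (h : n ≤ k) (x : X) :
    (⇑f)^[n] ((⇑f.symm)^[k] x) = (⇑f.symm)^[k - n] x := by
  obtain ⟨j, rfl⟩ := Nat.exists_eq_add_of_le h
  rw [Nat.add_sub_cancel_left, Function.iterate_add_apply]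
  exact (Function.LeftInverse.iterate f.apply_symm_apply n) _

theorem Homeomorph.symm_iterate_iterate (k : ℕ) (x : X) :
    (⇑f.symm)^[k] ((⇑f)^[k] x) = x :=
  (Function.LeftInverse.iterate f.symm_apply_apply k) x

variable [CompactSpace X] {c : ℝ}

/-- Take `N` so that `N`-step `c`-close points are closer than a modulus of uniform continuity
of `f⁻¹` at scale `c`. -/
theorem exists_orbitClose_symm (hc : 0 < c)
    (hexp : ∀ x y : X, x ≠ y → ∃ n : ℕ, c < dist ((⇑f)^[n] x) ((⇑f)^[n] y)) :
    ∃ N, ∀ x y, OrbitClose f c N x y → OrbitClose f c N (f.symm x) (f.symm y) := by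
  obtain ⟨ε, hε, hεsymm⟩ := Metric.uniformContinuous_iff.1
    (CompactSpace.uniformContinuous_of_continuous f.symm.continuous) c hc
  obtain ⟨N, hN⟩ := exists_dist_lt_of_orbitClose f.continuous hexp hε
  refine ⟨N, fun x y hclose n hn => ?_⟩
  cases n with
  | zero => exact (hεsymm (hN x y hclose)).le
  | succ n =>
    simpa only [Function.iterate_succ_apply, f.apply_symm_apply] using hclose n (by omega)

theorem exists_symm_iterate_dist_lt (hc : 0 < c)
    (hexp : ∀ x y : X, x ≠ y → ∃ n : ℕ, c < dist ((⇑f)^[n] x) ((⇑f)^[n] y)) :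
    ∃ N, ∀ δ > 0, ∃ K, ∀ x y, OrbitClose f c N x y →
      dist ((⇑f.symm)^[K] x) ((⇑f.symm)^[K] y) < δ := by
  obtain ⟨N, hN⟩ := exists_orbitClose_symm f hc hexp
  have hiter : ∀ k x y, OrbitClose f c N x y →
      OrbitClose f c N ((⇑f.symm)^[k] x) ((⇑f.symm)^[k] y) := by
    intro k
    induction k with
    | zero => exact fun _ _ h => h
    | succ k ih =>
      intro x y h
      simpa only [Function.iterate_succ_apply'] using hN _ _ (ih x y h)
  refine ⟨N, fun δ hδ => ?_⟩
  obtain ⟨K, hK⟩ := exists_dist_lt_of_orbitClose f.continuous hexp hδ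
  refine ⟨K, fun x y h => hK _ _ fun n hn => ?_⟩
  rw [f.iterate_symm_iterate_of_le hn, f.iterate_symm_iterate_of_le hn]
  exact (hiter _ x y h).dist_le

end Homeomorph

theorem exists_finite_fibres_dist_lt [CompactSpace X] {ρ : ℝ} (hρ : 0 < ρ) :
    ∃ t : Set X, t.Finite ∧ ∃ g : X → t, ∀ x y, g x = g y → dist x y < ρ := by
  obtain ⟨t, -, ht, hcover⟩ := (isCompact_univ (X := X)).finite_cover_balls (half_pos hρ)
  have hcenter : ∀ x, ∃ z : t, x ∈ Metric.ball (z : X) (ρ / 2) := fun x => by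
    obtain ⟨z, hz, hxz⟩ := Set.mem_iUnion₂.1 (hcover (Set.mem_univ x))
    exact ⟨⟨z, hz⟩, hxz⟩
  choose g hg using hcenter
  refine ⟨t, ht, g, fun x y hxy => ?_⟩
  have hy := hg y
  rw [← hxy] at hy
  calc dist x y ≤ dist x (g x) + dist y (g x) := dist_triangle_right _ _ _
    _ < ρ / 2 + ρ / 2 := add_lt_add (hg x) hy
    _ = ρ := add_halves ρ

theorem finite_of_forall_exists_fibres_dist_lt {ι : Type*} [Finite ι]
    (h : ∀ δ > 0, ∃ g : X → ι, ∀ x y, g x = g y → dist x y < δ) : Finite X := by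
  by_contra hX
  rw [not_finite_iff_infinite] at hX
  have := Fintype.ofFinite ι
  obtain ⟨u, hu⟩ := Infinite.exists_subset_card_eq X (Fintype.card ι + 1)
  have hsep : ∀ᶠ δ in 𝓝[>] (0 : ℝ), ∀ p ∈ u.offDiag, δ < dist p.1 p.2 :=
    nhdsWithin_le_nhds <| (eventually_all_finset _).2 fun p hp =>
      eventually_lt_nhds (dist_pos.2 (Finset.mem_offDiag.1 hp).2.2)
  obtain ⟨δ, hδsep, hδ⟩ := (hsep.and self_mem_nhdsWithin).exists
  obtain ⟨g, hg⟩ := h δ hδ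
  obtain ⟨x, hx, y, hy, hxy, hgxy⟩ := Finset.exists_ne_map_eq_of_card_lt_of_maps_to
    (s := u) (t := Finset.univ) (by simp [hu]) fun x _ => Finset.mem_coe.2 (Finset.mem_univ (g x))
  exact (hg x y hgxy).not_gt (hδsep (x, y) (Finset.mem_offDiag.2 ⟨hx, hy, hxy⟩))

end

theorem stmt_0 {X : Type*} [MetricSpace X] [CompactSpace X]
    (f : X ≃ₜ X) (c : ℝ) (hc : 0 < c)
    (hexp : ∀ x y : X, x ≠ y → ∃ n : ℕ, c < dist ((f : X → X)^[n] x) ((f : X → X)^[n] y)) :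
    Finite X := by
  obtain ⟨N, hcontract⟩ := exists_symm_iterate_dist_lt f hc hexp
  obtain ⟨ρ, hρ, hclose⟩ := exists_orbitClose_of_dist_lt f.continuous hc N
  obtain ⟨t, ht, g, hg⟩ := exists_finite_fibres_dist_lt (X := X) hρ
  have := ht.to_subtype
  refine finite_of_forall_exists_fibres_dist_lt (ι := t) fun δ hδ => ?_
  obtain ⟨K, hK⟩ := hcontract δ hδ
  refine ⟨g ∘ (⇑f)^[K], fun x y hxy => ?_⟩
  simpa only [f.symm_iterate_iterate] using hK _ _ (hclose _ _ (hg _ _ hxy))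
end

section
/- (Maximal Ergodic Theorem) Let T be a measure-preserving transformation of a probability space (X, μ) and f ∈ L¹(μ). Let E be the set of points x for which sup over n ≥ 1 of the partial sums f(x) + f(Tx) + ... + f(T^{n-1}x) is positive. Then the integral of f over E is nonnegative. -/
open MeasureTheory Filter

section Aux

variable {X : Type*} (T : X → X) (f : X → ℝ)

/-- Garsia's maximal function: `mxf T f n x = max (0, S₁ f x, ..., Sₙ f x)`. -/
noncomputable def mxf : ℕ → X → ℝ
  | 0 => fun _ => 0
  | n + 1 => fun x => max 0 (f x + mxf n (T x))

lemma mxf_nonneg (n : ℕ) (x : X) : 0 ≤ mxf T f n x := by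
  cases n <;> simp [mxf]

lemma mxf_mono (n : ℕ) (x : X) : mxf T f n x ≤ mxf T f (n + 1) x := by
  induction n generalizing x with
  | zero => simpa [mxf] using mxf_nonneg T f 1 x
  | succ n ih =>
    show max 0 (f x + mxf T f n (T x)) ≤ max 0 (f x + mxf T f (n + 1) (T x))
    exact max_le_max le_rfl (add_le_add le_rfl (ih (T x)))

lemma sum_iter_succ (n : ℕ) (x : X) :
    ∑ k ∈ Finset.range (n + 1), f (T^[k] x)
      = f x + ∑ k ∈ Finset.range n, f (T^[k] (T x)) := by
  rw [Finset.sum_range_succ']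
  simp only [Function.iterate_succ_apply, Function.iterate_zero_apply]
  ring

lemma sum_le_mxf (n : ℕ) (x : X) :
    ∑ k ∈ Finset.range n, f (T^[k] x) ≤ mxf T f n x := by
  induction n generalizing x with
  | zero => simp [mxf]
  | succ n ih =>
    rw [sum_iter_succ]
    calc f x + ∑ k ∈ Finset.range n, f (T^[k] (T x))
        ≤ f x + mxf T f n (T x) := by linarith [ih (T x)]
      _ ≤ mxf T f (n + 1) x := le_max_right _ _

lemma mxf_pos_exists (n : ℕ) (x : X) (h : 0 < mxf T f n x) :
    ∃ k, 1 ≤ k ∧ ∑ i ∈ Finset.range k, f (T^[i] x) = mxf T f n x := by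
  induction n generalizing x with
  | zero => simp [mxf] at h
  | succ n ih =>
    have heq : mxf T f (n + 1) x = f x + mxf T f n (T x) := by
      simp only [mxf] at h ⊢
      exact max_eq_right (by rcases max_cases 0 (f x + mxf T f n (T x)) with ⟨h1, _⟩ | ⟨h1, _⟩ <;> linarith)
    rcases lt_or_eq_of_le (mxf_nonneg T f n (T x)) with hpos | hzero
    · obtain ⟨k, hk1, hk⟩ := ih (T x) hpos
      exact ⟨k + 1, by omega, by rw [sum_iter_succ, hk, heq]⟩
    · refine ⟨1, le_rfl, ?_⟩
      simp [heq, ← hzero]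

end Aux

section Meas

variable {X : Type*} [MeasurableSpace X] {μ : Measure X} [IsFiniteMeasure μ]
  {T : X → X} {f : X → ℝ}

lemma mxf_measurable (hT : Measurable T) (hf : Measurable f) (n : ℕ) :
    Measurable (mxf T f n) := by
  induction n with
  | zero => simpa [mxf] using measurable_const
  | succ n ih =>
    simp only [mxf]
    exact measurable_const.max (hf.add (ih.comp hT))

lemma mxf_integrable (hT : MeasurePreserving T μ μ) (hmf : Measurable f)
    (hf : Integrable f μ) (n : ℕ) : Integrable (mxf T f n) μ := by
  induction n with
  | zero => simpa [mxf] using integrable_const (0 : ℝ)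
  | succ n ih =>
    simp only [mxf]
    have hcomp : Integrable (mxf T f n ∘ T) μ :=
      (hT.integrable_comp (mxf_measurable hT.measurable hmf n).aestronglyMeasurable).mpr ih
    have := (integrable_const (0 : ℝ) : Integrable (fun _ => (0:ℝ)) μ).sup (hf.add hcomp)
    refine this.congr (Filter.Eventually.of_forall fun x => ?_)
    simp

/-- The key step: the integral of `f` over `{mxf T f (n+1) > 0}` is nonnegative. -/
lemma step (hT : MeasurePreserving T μ μ) (hmf : Measurable f)
    (hf : Integrable f μ) (n : ℕ) :
    0 ≤ ∫ x in {x | 0 < mxf T f (n + 1) x}, f x ∂μ := by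
  set g : X → ℝ := mxf T f (n + 1) with hg
  set A : Set X := {x | 0 < g x} with hA
  have hgm : Measurable g := mxf_measurable hT.measurable hmf (n + 1)
  have hgint : Integrable g μ := mxf_integrable hT hmf hf (n + 1)
  have hgT : Integrable (g ∘ T) μ :=
    (hT.integrable_comp hgm.aestronglyMeasurable).mpr hgint
  have hAm : MeasurableSet A := measurableSet_lt measurable_const hgm
  -- pointwise key inequality on A
  have key : ∀ x ∈ A, g x - g (T x) ≤ f x := by
    intro x hx
    have hx' : 0 < g x := hx
    have heq : g x = f x + mxf T f n (T x) := by
      simp only [hg, mxf] at hx' ⊢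
      exact max_eq_right (by rcases max_cases 0 (f x + mxf T f n (T x)) with ⟨h1, _⟩ | ⟨h1, _⟩ <;> linarith)
    have := mxf_mono T f n (T x)
    rw [heq]; simpa [hg] using this
  have h1 : ∫ x in A, (g x - g (T x)) ∂μ ≤ ∫ x in A, f x ∂μ :=
    setIntegral_mono_on (hgint.sub hgT).integrableOn hf.integrableOn hAm key
  have h2 : ∫ x in A, (g x - g (T x)) ∂μ
      = (∫ x in A, g x ∂μ) - ∫ x in A, g (T x) ∂μ :=
    integral_sub hgint.integrableOn hgT.integrableOn
  -- ∫_A g = ∫ g since g = 0 off A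
  have h3 : ∫ x in A, g x ∂μ = ∫ x, g x ∂μ := by
    have hcompl : ∫ x in Aᶜ, g x ∂μ = 0 := by
      have : ∀ x ∈ Aᶜ, g x = 0 := fun x hx =>
        le_antisymm (not_lt.1 hx) (mxf_nonneg T f (n + 1) x)
      calc ∫ x in Aᶜ, g x ∂μ = ∫ x in Aᶜ, (0 : ℝ) ∂μ :=
            setIntegral_congr_fun hAm.compl (fun x hx => this x hx)
        _ = 0 := by simp
    have := integral_add_compl hAm hgint
    linarith
  have h4 : ∫ x in A, g (T x) ∂μ ≤ ∫ x, g (T x) ∂μ :=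
    setIntegral_le_integral hgT
      (Filter.Eventually.of_forall fun x => mxf_nonneg T f (n + 1) (T x))
  have h5 : ∫ x, g (T x) ∂μ = ∫ x, g x ∂μ := by
    rw [← hT.map_eq, integral_map hT.measurable.aemeasurable hgm.aestronglyMeasurable,
      hT.map_eq]
  linarith

end Meas

theorem stmt_1 {X : Type*} [MeasurableSpace X] (μ : Measure X) [IsProbabilityMeasure μ]
    (T : X → X) (hT : MeasurePreserving T μ μ)
    (f : X → ℝ) (hf : Integrable f μ) :
    0 ≤ ∫ x in {x : X | ∃ n : ℕ, 1 ≤ n ∧ 0 < ∑ k ∈ Finset.range n, f (T^[k] x)}, f x ∂μ := by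
  -- replace f by a measurable representative g
  obtain ⟨g, hgm, hfg⟩ : ∃ g, Measurable g ∧ f =ᵐ[μ] g := by
    refine ⟨hf.1.mk f, hf.1.measurable_mk, hf.1.ae_eq_mk⟩
  have hgint : Integrable g μ := hf.congr hfg
  set E : Set X := {x : X | ∃ n : ℕ, 1 ≤ n ∧ 0 < ∑ k ∈ Finset.range n, f (T^[k] x)} with hE
  set F : Set X := {x : X | ∃ n : ℕ, 1 ≤ n ∧ 0 < ∑ k ∈ Finset.range n, g (T^[k] x)} with hF
  -- a.e. all iterates agree
  have hiter : ∀ᵐ x ∂μ, ∀ k : ℕ, f (T^[k] x) = g (T^[k] x) := by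
    rw [MeasureTheory.ae_all_iff]
    intro k
    exact (hT.iterate k).quasiMeasurePreserving.ae_eq_comp hfg
  have hEF : E =ᵐ[μ] F := by
    filter_upwards [hiter] with x hx
    have : x ∈ E ↔ x ∈ F := by
      simp only [hE, hF, Set.mem_setOf_eq]
      constructor <;> rintro ⟨n, hn1, hn⟩ <;> refine ⟨n, hn1, ?_⟩ <;>
        [rw [← Finset.sum_congr rfl fun k _ => (hx k)]; rw [Finset.sum_congr rfl fun k _ => (hx k)]] <;>
        exact hn
    exact propext this
  have hint_eq : ∫ x in E, f x ∂μ = ∫ x in F, g x ∂μ := by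
    rw [setIntegral_congr_set hEF]
    exact integral_congr_ae (ae_restrict_of_ae hfg)
  rw [hint_eq]
  -- now work with the measurable g
  set A : ℕ → Set X := fun n => {x | 0 < mxf T g (n + 1) x} with hA
  have hAm : ∀ n, MeasurableSet (A n) := fun n =>
    measurableSet_lt measurable_const (mxf_measurable hT.measurable hgm (n + 1))
  have hAmono : Monotone A := by
    apply monotone_nat_of_le_succ
    intro n x hx
    exact lt_of_lt_of_le hx (mxf_mono T g (n + 1) x)
  have hFU : F = ⋃ n, A n := by
    ext x
    simp only [hF, hA, Set.mem_setOf_eq, Set.mem_iUnion]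
    constructor
    · rintro ⟨n, hn1, hn⟩
      obtain ⟨m, rfl⟩ := Nat.exists_eq_add_of_le hn1
      exact ⟨m, lt_of_lt_of_le hn (by simpa [Nat.add_comm] using sum_le_mxf T g (m + 1) x)⟩
    · rintro ⟨n, hn⟩
      obtain ⟨k, hk1, hk⟩ := mxf_pos_exists T g (n + 1) x hn
      exact ⟨k, hk1, hk ▸ hn⟩
  rw [hFU]
  have htend : Tendsto (fun n => ∫ x in A n, g x ∂μ) atTop (nhds (∫ x in ⋃ n, A n, g x ∂μ)) :=
    tendsto_setIntegral_of_monotone hAm hAmono (hgint.integrableOn)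
  exact ge_of_tendsto' htend fun n => step hT hgm hgint n
end
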